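/- arXiv:2012.03059 — 10 statements merged into one kernel-verified Lean document; each statement's English description precedes it below -/
import Mathlib

section
/- Let H be a finite-dimensional real inner product space, let τ > 0, σ ≥ 1/2, m ≥ 1, and let A be a self-adjoint operator on H with A ≥ δI for some δ > 0. Given coefficients a_i > 0, b_i > 0 for i = 1,…,m, set D_i = a_i (b_i I + A)⁻¹ A (each b_i I + A is invertible). Suppose a sequence (w^n)_{n=0,…,N} in H together with substeps w^{n,0} = w^n, w^{n,1}, …, w^{n,m} = w^{n+1} satisfies, for every n and every i = 1,…,m, the componentwise splitting scheme (w^{n,i} − w^{n,i−1})/τ + D_i(σ w^{n,i} + (1−σ) w^{n,i−1}) = 0, with w^0 = u⁰. Then the scheme is unconditionally stable: ‖w^{n+1}‖ ≤ ‖u⁰‖ for all n = 0,…,N−1. -/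
open scoped RealInnerProductSpace

/-- Unconditional stability of the componentwise splitting scheme with weight
`σ ≥ 1/2` for the additive decomposition `D = Σᵢ Dᵢ`, `Dᵢ = aᵢ (bᵢ I + A)⁻¹ A`. -/
theorem splitting_scheme_unconditionally_stable
    {H : Type*} [NormedAddCommGroup H] [InnerProductSpace ℝ H] [FiniteDimensional ℝ H]
    (τ σ : ℝ) (hτ : 0 < τ) (hσ : 1 / 2 ≤ σ)
    (m : ℕ) (hm : 1 ≤ m)
    (A : H →ₗ[ℝ] H)
    (hAsym : ∀ x y : H, ⟪A x, y⟫ = ⟪x, A y⟫)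
    (δ : ℝ) (hδ : 0 < δ)
    (hAδ : ∀ x : H, δ * ‖x‖ ^ 2 ≤ ⟪A x, x⟫)
    (a b : Fin m → ℝ) (ha : ∀ i, 0 < a i) (hb : ∀ i, 0 < b i)
    (D : Fin m → (H →ₗ[ℝ] H))
    (hD : ∀ i, D i = a i • (Ring.inverse (b i • (1 : H →ₗ[ℝ] H) + A) * A))
    (N : ℕ) (u0 : H) (w : ℕ → H) (ws : ℕ → ℕ → H)
    (hw0 : w 0 = u0)
    (hws0 : ∀ n, n < N → ws n 0 = w n)
    (hwsm : ∀ n, n < N → ws n m = w (n + 1))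
    (hscheme : ∀ n, n < N → ∀ i : Fin m,
      (1 / τ) • (ws n (i + 1) - ws n i) +
        D i (σ • ws n (i + 1) + (1 - σ) • ws n i) = 0) :
    ∀ n, n < N → ‖w (n + 1)‖ ≤ ‖u0‖ := by
  -- each `b i • 1 + A` is a unit
  have hPunit : ∀ i : Fin m, IsUnit (b i • (1 : H →ₗ[ℝ] H) + A) := by
    intro i
    rw [LinearMap.isUnit_iff_ker_eq_bot, LinearMap.ker_eq_bot']
    intro x hx
    have h1 : ⟪(b i • (1 : H →ₗ[ℝ] H) + A) x, x⟫ = 0 := by rw [hx]; simp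
    have h2 : b i * ‖x‖ ^ 2 + ⟪A x, x⟫ = 0 := by
      simpa [LinearMap.add_apply, LinearMap.smul_apply, inner_add_left,
        real_inner_smul_left, real_inner_self_eq_norm_sq] using h1
    have h3 := hAδ x
    have hx2 : ‖x‖ ^ 2 = 0 := by nlinarith [hb i, sq_nonneg ‖x‖]
    have : ‖x‖ = 0 := by
      have := sq_nonneg ‖x‖
      nlinarith [norm_nonneg x]
    simpa using this
  -- positivity of D i
  have hDpos : ∀ (i : Fin m) (v : H), 0 ≤ ⟪(D i) v, v⟫ := by
    intro i v
    set P := b i • (1 : H →ₗ[ℝ] H) + A with hP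
    have hcomm : A * P = P * A := by
      simp only [hP, mul_add, add_mul, mul_smul_comm, smul_mul_assoc, mul_one, one_mul]
    have h1 : Ring.inverse P * P = 1 := Ring.inverse_mul_cancel P (hPunit i)
    have h2 : P * Ring.inverse P = 1 := Ring.mul_inverse_cancel P (hPunit i)
    have hinv : Ring.inverse P * A = A * Ring.inverse P := by
      calc Ring.inverse P * A = Ring.inverse P * A * (P * Ring.inverse P) := by
            rw [h2, mul_one]
        _ = Ring.inverse P * (A * P) * Ring.inverse P := by
            rw [mul_assoc, mul_assoc, mul_assoc]
        _ = Ring.inverse P * (P * A) * Ring.inverse P := by rw [hcomm]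
        _ = (Ring.inverse P * P) * (A * Ring.inverse P) := by
            rw [mul_assoc, mul_assoc, mul_assoc]
        _ = A * Ring.inverse P := by rw [h1, one_mul]
    set z := Ring.inverse P v with hz
    have hvz : v = P z := by
      have : (P * Ring.inverse P) v = (1 : H →ₗ[ℝ] H) v := by rw [h2]
      simpa [Module.End.mul_apply, Module.End.one_apply, ← hz] using this.symm
    have hDv : (D i) v = a i • (A z) := by
      rw [hD i]
      simp only [LinearMap.smul_apply, Module.End.mul_apply]
      rw [show (Ring.inverse P) (A v) = (Ring.inverse P * A) v from rfl, hinv]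
      rfl
    rw [hDv, real_inner_smul_left]
    have : ⟪A z, v⟫ = b i * ⟪A z, z⟫ + ⟪A z, A z⟫ := by
      rw [hvz]
      simp [hP, LinearMap.add_apply, LinearMap.smul_apply, inner_add_right,
        real_inner_smul_right]
    rw [this]
    have hAz : 0 ≤ ⟪A z, z⟫ := le_trans (by positivity) (hAδ z)
    have := real_inner_self_nonneg (x := A z)
    exact mul_nonneg (ha i).le (add_nonneg (mul_nonneg (hb i).le hAz) this)
  -- one substep is non-expansive
  have hstep : ∀ n, n < N → ∀ k, k < m → ‖ws n (k + 1)‖ ≤ ‖ws n k‖ := by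
    intro n hn k hk
    have h := hscheme n hn ⟨k, hk⟩
    simp only [Fin.val_mk] at h  -- reduce coercion
    set x := ws n k
    set y := ws n (k + 1)
    set u := σ • y + (1 - σ) • x with hu
    have hyx : y - x = -(τ • (D ⟨k, hk⟩) u) := by
      have h' : (1 / τ) • (y - x) = -(D ⟨k, hk⟩ u) := by
        rw [eq_neg_iff_add_eq_zero]; exact h
      have := congrArg (fun v => τ • v) h'
      simpa [smul_smul, mul_div_cancel₀, hτ.ne', smul_neg, div_self hτ.ne'] using this
    have hip : ⟪y - x, u⟫ ≤ 0 := by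
      rw [hyx]
      have := hDpos ⟨k, hk⟩ u
      rw [inner_neg_left, real_inner_smul_left]
      nlinarith [hτ.le]
    have hexp : ⟪y - x, u⟫ =
        σ * ⟪y, y⟫ + (1 - 2 * σ) * ⟪y, x⟫ - (1 - σ) * ⟪x, x⟫ := by
      simp only [hu, inner_sub_left, inner_add_right, real_inner_smul_right]
      rw [real_inner_comm x y]
      ring
    have hsq : 0 ≤ ⟪y, y⟫ - 2 * ⟪y, x⟫ + ⟪x, x⟫ := by
      have h0 := real_inner_self_nonneg (x := y - x)
      have : ⟪y - x, y - x⟫ = ⟪y, y⟫ - 2 * ⟪y, x⟫ + ⟪x, x⟫ := by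
        simp only [inner_sub_left, inner_sub_right]
        rw [real_inner_comm x y]; ring
      linarith [this ▸ h0]
    have hkey : ⟪y, y⟫ ≤ ⟪x, x⟫ := by
      nlinarith [mul_nonneg (by linarith : (0:ℝ) ≤ σ - 1 / 2) hsq]
    rw [real_inner_self_eq_norm_sq, real_inner_self_eq_norm_sq] at hkey
    nlinarith [norm_nonneg x, norm_nonneg y]
  -- iterate over substeps
  have hsub : ∀ n, n < N → ∀ k, k ≤ m → ‖ws n k‖ ≤ ‖ws n 0‖ := by
    intro n hn k
    induction k with
    | zero => intro _; exact le_rfl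
    | succ k ih =>
      intro hk1
      have hk : k < m := hk1
      exact le_trans (hstep n hn k hk) (ih (le_of_lt hk))
  -- iterate over time steps
  have hmain : ∀ n, n ≤ N → ‖w n‖ ≤ ‖u0‖ := by
    intro n
    induction n with
    | zero => intro _; rw [hw0]
    | succ n ih =>
      intro hn1
      have hn : n < N := hn1
      calc ‖w (n + 1)‖ = ‖ws n m‖ := by rw [hwsm n hn]
        _ ≤ ‖ws n 0‖ := hsub n hn m le_rfl
        _ = ‖w n‖ := by rw [hws0 n hn]
        _ ≤ ‖u0‖ := ih (le_of_lt hn)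
  intro n hn
  exact hmain (n + 1) hn
end

section
/- Let H be a finite-dimensional real inner product space, let τ > 0, σ ≥ 1/2, m ≥ 1. Let B be a positive definite operator on H, let A be a self-adjoint operator on H with A ≥ δI for some δ > 0, and for coefficients a_i > 0, b_i > 0 set D_i = a_i (b_i I + A)⁻¹ A, i = 1,…,m. Suppose a sequence (w^n)_{n=0,…,N} in H together with substeps w^{n,0} = w^n, w^{n,1}, …, w^{n,m} = w^{n+1} satisfies, for every n and every i = 1,…,m, the splitting scheme B (w^{n,i} − w^{n,i−1})/τ + D_i(σ w^{n,i} + (1−σ) w^{n,i−1}) = 0, with w^0 = u⁰. Then the scheme is stable in the B-norm: ‖w^{n+1}‖_B ≤ ‖u⁰‖_B for all n = 0,…,N−1. -/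
open scoped RealInnerProductSpace

/-!
Each substep is a weighted (θ-)scheme for `B dv/dt + Dᵢ v = 0` with `Dᵢ ≥ 0`. Testing the
substep equation with `z = σ y + (1 - σ) x` and using the identity
`⟪B (y - x), z⟫ = (‖y‖²_B - ‖x‖²_B) / 2 + (σ - 1/2) ‖y - x‖²_B`
shows that the `B`-energy cannot grow in a substep when `σ ≥ 1/2`. Each `Dᵢ` is nonnegative
because `(bI + A)⁻¹` commutes with `A`: writing `v = (bI + A) y` gives
`⟪Dᵢ v, v⟫ = aᵢ (b ⟪A y, y⟫ + ‖A y‖²)`.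
-/

theorem Nat.apply_le_apply_zero_of_succ_le {α : Type*} [Preorder α] {f : ℕ → α} :
    ∀ {m : ℕ}, (∀ k < m, f (k + 1) ≤ f k) → f m ≤ f 0
  | 0, _ => le_rfl
  | m + 1, h =>
    (h m m.lt_succ_self).trans <|
      apply_le_apply_zero_of_succ_le fun k hk => h k (hk.trans m.lt_succ_self)

section InnerProductSpace

variable {H : Type*} [NormedAddCommGroup H] [InnerProductSpace ℝ H]

theorem inner_inverse_smul_one_add_mul_self_nonneg (A : H →ₗ[ℝ] H)
    (hA : ∀ x, 0 ≤ ⟪A x, x⟫) {b : ℝ} (hb : 0 ≤ b) (v : H) :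
    0 ≤ ⟪(Ring.inverse (b • 1 + A) * A) v, v⟫ := by
  by_cases hC : IsUnit (b • 1 + A)
  · obtain ⟨C, hCA⟩ := hC
    have hcomm : Commute (↑C⁻¹ : H →ₗ[ℝ] H) A := by
      apply Commute.units_inv_left
      rw [hCA]
      exact ((Commute.one_left A).smul_left b).add_left (Commute.refl A)
    obtain ⟨y, rfl⟩ : ∃ y, v = (C : H →ₗ[ℝ] H) y :=
      ⟨(↑C⁻¹ : H →ₗ[ℝ] H) v, by rw [← Module.End.mul_apply, C.mul_inv, Module.End.one_apply]⟩
    have hy : (Ring.inverse (b • 1 + A) * A) ((C : H →ₗ[ℝ] H) y) = A y := by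
      rw [← hCA, Ring.inverse_unit, hcomm.eq, Module.End.mul_apply,
        ← Module.End.mul_apply (↑C⁻¹ : H →ₗ[ℝ] H), C.inv_mul, Module.End.one_apply]
    rw [hy, hCA]
    simp only [LinearMap.add_apply, LinearMap.smul_apply, Module.End.one_apply, inner_add_right,
      real_inner_smul_right]
    exact add_nonneg (mul_nonneg hb (hA y)) real_inner_self_nonneg
  · rw [Ring.inverse_non_unit _ hC, zero_mul, LinearMap.zero_apply, inner_zero_left]

variable {B : H →ₗ[ℝ] H}

theorem inner_sub_weighted_eq (hB : ∀ x y, ⟪B x, y⟫ = ⟪x, B y⟫) (σ : ℝ) (x y : H) :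
    ⟪B (y - x), σ • y + (1 - σ) • x⟫ =
      (⟪B y, y⟫ - ⟪B x, x⟫) / 2 + (σ - 1 / 2) * ⟪B (y - x), y - x⟫ := by
  have hxy : ⟪B x, y⟫ = ⟪B y, x⟫ := by rw [hB, real_inner_comm]
  simp only [map_sub, inner_sub_left, inner_sub_right, inner_add_right, real_inner_smul_right,
    hxy]
  ring

theorem weighted_step_energy_le (hB : ∀ x y, ⟪B x, y⟫ = ⟪x, B y⟫) (hBnn : ∀ x, 0 ≤ ⟪B x, x⟫)
    {D : H →ₗ[ℝ] H} {τ σ : ℝ} (hτ : 0 < τ) (hσ : 1 / 2 ≤ σ) {x y : H}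
    (hD : 0 ≤ ⟪D (σ • y + (1 - σ) • x), σ • y + (1 - σ) • x⟫)
    (hstep : (1 / τ) • B (y - x) + D (σ • y + (1 - σ) • x) = 0) :
    ⟪B y, y⟫ ≤ ⟪B x, x⟫ := by
  set z := σ • y + (1 - σ) • x
  have htest : ⟪B (y - x), z⟫ = -τ * ⟪D z, z⟫ := by
    have h := congrArg (fun u => τ * ⟪u, z⟫) hstep
    simp only [inner_add_left, real_inner_smul_left, inner_zero_left, mul_zero, mul_add,
      ← mul_assoc, mul_one_div_cancel hτ.ne', one_mul] at h
    linarith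
  have hdiss : ⟪B (y - x), z⟫ ≤ 0 := by
    rw [htest]
    exact mul_nonpos_of_nonpos_of_nonneg (by linarith) hD
  rw [inner_sub_weighted_eq hB] at hdiss
  linarith [mul_nonneg (sub_nonneg.mpr hσ) (hBnn (y - x))]

end InnerProductSpace

theorem splitting_scheme_B_norm_stable_general
    {H : Type*} [NormedAddCommGroup H] [InnerProductSpace ℝ H]
    (τ σ : ℝ) (hτ : 0 < τ) (hσ : 1 / 2 ≤ σ)
    (m : ℕ)
    (B : H →ₗ[ℝ] H)
    (hBsym : ∀ x y : H, ⟪B x, y⟫ = ⟪x, B y⟫)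
    (hBpos : ∀ x : H, x ≠ 0 → 0 < ⟪B x, x⟫)
    (A : H →ₗ[ℝ] H)
    (δ : ℝ) (hδ : 0 < δ)
    (hAδ : ∀ x : H, δ * ‖x‖ ^ 2 ≤ ⟪A x, x⟫)
    (a b : Fin m → ℝ) (ha : ∀ i, 0 < a i) (hb : ∀ i, 0 < b i)
    (D : Fin m → (H →ₗ[ℝ] H))
    (hD : ∀ i, D i = a i • (Ring.inverse (b i • (1 : H →ₗ[ℝ] H) + A) * A))
    (N : ℕ) (u0 : H) (w : ℕ → H) (ws : ℕ → ℕ → H)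
    (hw0 : w 0 = u0)
    (hws0 : ∀ n, n < N → ws n 0 = w n)
    (hwsm : ∀ n, n < N → ws n m = w (n + 1))
    (hscheme : ∀ n, n < N → ∀ i : Fin m,
      (1 / τ) • B (ws n (i + 1) - ws n i) +
        D i (σ • ws n (i + 1) + (1 - σ) • ws n i) = 0) :
    ∀ n, n < N →
      Real.sqrt ⟪B (w (n + 1)), w (n + 1)⟫ ≤ Real.sqrt ⟪B u0, u0⟫ := by
  have hBnn : ∀ x, 0 ≤ ⟪B x, x⟫ := fun x => by
    rcases eq_or_ne x 0 with rfl | hx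
    · simp
    · exact (hBpos x hx).le
  have hAnn : ∀ x, 0 ≤ ⟪A x, x⟫ := fun x => (by positivity : 0 ≤ δ * ‖x‖ ^ 2).trans (hAδ x)
  have hDnn : ∀ i v, 0 ≤ ⟪D i v, v⟫ := fun i v => by
    rw [hD i, LinearMap.smul_apply, real_inner_smul_left]
    exact mul_nonneg (ha i).le (inner_inverse_smul_one_add_mul_self_nonneg A hAnn (hb i).le v)
  have htimestep : ∀ n < N, ⟪B (w (n + 1)), w (n + 1)⟫ ≤ ⟪B (w n), w n⟫ := fun n hn => by
    rw [← hwsm n hn, ← hws0 n hn]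
    exact Nat.apply_le_apply_zero_of_succ_le (f := fun k => ⟪B (ws n k), ws n k⟫)
      fun k hk => weighted_step_energy_le hBsym hBnn hτ hσ (hDnn _ _) (hscheme n hn ⟨k, hk⟩)
  intro n hn
  rw [← hw0]
  exact Real.sqrt_le_sqrt <|
    Nat.apply_le_apply_zero_of_succ_le (f := fun k => ⟪B (w k), w k⟫) fun k hk =>
      htimestep k (hk.trans_le hn)

/-- Stability in the `B`-norm of the componentwise splitting scheme with weight
`σ ≥ 1/2` for the equation `B dv/dt + D v = 0`, `D = Σᵢ Dᵢ`, `Dᵢ = aᵢ (bᵢ I + A)⁻¹ A`. -/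
theorem splitting_scheme_B_norm_stable
    {H : Type*} [NormedAddCommGroup H] [InnerProductSpace ℝ H] [FiniteDimensional ℝ H]
    (τ σ : ℝ) (hτ : 0 < τ) (hσ : 1 / 2 ≤ σ)
    (m : ℕ) (hm : 1 ≤ m)
    (B : H →ₗ[ℝ] H)
    (hBsym : ∀ x y : H, ⟪B x, y⟫ = ⟪x, B y⟫)
    (hBpos : ∀ x : H, x ≠ 0 → 0 < ⟪B x, x⟫)
    (A : H →ₗ[ℝ] H)
    (hAsym : ∀ x y : H, ⟪A x, y⟫ = ⟪x, A y⟫)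
    (δ : ℝ) (hδ : 0 < δ)
    (hAδ : ∀ x : H, δ * ‖x‖ ^ 2 ≤ ⟪A x, x⟫)
    (a b : Fin m → ℝ) (ha : ∀ i, 0 < a i) (hb : ∀ i, 0 < b i)
    (D : Fin m → (H →ₗ[ℝ] H))
    (hD : ∀ i, D i = a i • (Ring.inverse (b i • (1 : H →ₗ[ℝ] H) + A) * A))
    (N : ℕ) (u0 : H) (w : ℕ → H) (ws : ℕ → ℕ → H)
    (hw0 : w 0 = u0)
    (hws0 : ∀ n, n < N → ws n 0 = w n)
    (hwsm : ∀ n, n < N → ws n m = w (n + 1))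
    (hscheme : ∀ n, n < N → ∀ i : Fin m,
      (1 / τ) • B (ws n (i + 1) - ws n i) +
        D i (σ • ws n (i + 1) + (1 - σ) • ws n i) = 0) :
    ∀ n, n < N →
      Real.sqrt ⟪B (w (n + 1)), w (n + 1)⟫ ≤ Real.sqrt ⟪B u0, u0⟫ :=
  splitting_scheme_B_norm_stable_general τ σ hτ hσ m B hBsym hBpos A δ hδ hAδ a b ha hb D hD N u0 w
    ws hw0 hws0 hwsm hscheme
end

section
/- Let H be a finite-dimensional real inner product space and τ > 0. Let B be a positive definite operator on H, let Q be a positive semidefinite operator on H, and assume B ≥ (τ/2) Q, i.e. B − (τ/2)Q is positive semidefinite. If a sequence (y^n)_{n=0,…,N} in H satisfies the explicit scheme B (y^{n+1} − y^n)/τ + Q y^n = 0 for n = 0,…,N−1, then the scheme is stable in the B-norm: ‖y^{n+1}‖_B ≤ ‖y^n‖_B for all n = 0,…,N−1. -/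
open scoped RealInnerProductSpace

/-- Stability in the `B`-norm of the explicit scheme `B (yⁿ⁺¹ - yⁿ)/τ + Q yⁿ = 0`
under the condition `B ≥ (τ/2) Q`. -/
theorem explicit_scheme_B_norm_stable
    {H : Type*} [NormedAddCommGroup H] [InnerProductSpace ℝ H] [FiniteDimensional ℝ H]
    (τ : ℝ) (hτ : 0 < τ)
    (B : H →ₗ[ℝ] H)
    (hBsym : ∀ x y : H, ⟪B x, y⟫ = ⟪x, B y⟫)
    (hBpos : ∀ x : H, x ≠ 0 → 0 < ⟪B x, x⟫)
    (Q : H →ₗ[ℝ] H)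
    (hQsym : ∀ x y : H, ⟪Q x, y⟫ = ⟪x, Q y⟫)
    (hQpos : ∀ x : H, 0 ≤ ⟪Q x, x⟫)
    (hBQ : ∀ x : H, 0 ≤ ⟪(B - (τ / 2) • Q) x, x⟫)
    (N : ℕ) (y : ℕ → H)
    (hscheme : ∀ n, n < N → (1 / τ) • B (y (n + 1) - y n) + Q (y n) = 0) :
    ∀ n, n < N →
      Real.sqrt ⟪B (y (n + 1)), y (n + 1)⟫ ≤ Real.sqrt ⟪B (y n), y n⟫ := by
  intro n hn
  set u := y n with hu
  set w := y (n + 1) - y n with hw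
  have hy : y (n + 1) = u + w := by simp [hw, hu]
  have hs := hscheme n hn
  have hBw : B w = (-τ) • Q u := by
    have h := congrArg (fun x : H => τ • x) hs
    simp only [smul_add, smul_smul, smul_zero] at h
    rw [mul_one_div, div_self hτ.ne', one_smul] at h
    have h2 := eq_neg_of_add_eq_zero_left h
    rw [hw, hu, neg_smul]
    exact h2
  have hbwu : ⟪B w, u⟫ = -τ * ⟪Q u, u⟫ := by
    rw [hBw, real_inner_smul_left]
  have hbww : ⟪B w, w⟫ = -τ * ⟪Q u, w⟫ := by
    rw [hBw, real_inner_smul_left]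
  have hQwu : ⟪Q w, u⟫ = ⟪Q u, w⟫ := by
    rw [hQsym w u, real_inner_comm]
  have hBuw : ⟪B u, w⟫ = ⟪B w, u⟫ := by
    rw [hBsym u w, real_inner_comm]
  have hQz := hQpos (u + (1 / 2 : ℝ) • w)
  have hQzexp : ⟪Q (u + (1 / 2 : ℝ) • w), u + (1 / 2 : ℝ) • w⟫
      = ⟪Q u, u⟫ + ⟪Q u, w⟫ + (1 / 4) * ⟪Q w, w⟫ := by
    simp only [map_add, map_smul, inner_add_left, inner_add_right,
      real_inner_smul_left, real_inner_smul_right, hQwu]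
    ring
  rw [hQzexp] at hQz
  have hBQw := hBQ w
  have hBQwexp : ⟪(B - (τ / 2) • Q) w, w⟫ = ⟪B w, w⟫ - (τ / 2) * ⟪Q w, w⟫ := by
    simp only [LinearMap.sub_apply, LinearMap.smul_apply, inner_sub_left,
      real_inner_smul_left]
  rw [hBQwexp, hbww] at hBQw
  apply Real.sqrt_le_sqrt
  rw [hy]
  have hexp : ⟪B (u + w), u + w⟫
      = ⟪B u, u⟫ + 2 * ⟪B w, u⟫ + ⟪B w, w⟫ := by
    simp only [map_add, inner_add_left, inner_add_right, hBuw]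
    ring
  rw [hexp, hbwu, hbww]
  have hQww := hQpos w
  have hQuu := hQpos u
  nlinarith [mul_pos hτ hτ, sq_nonneg τ]
end

section
/- Let H be a finite-dimensional real inner product space, τ > 0, σ > 0, m ≥ 1. Let B be a self-adjoint operator on H with B ≥ γI for some γ > 0 satisfying 2γσ ≥ 1. Let A be a self-adjoint operator on H with A ≥ δI for some δ > 0, and for coefficients a_i > 0, b_i > 0 define the regularized operators R_i = a_i (b_i I + A + σ τ a_i A)⁻¹ A, i = 1,…,m. Suppose a sequence (w^n)_{n=0,…,N} in H together with substeps w^{n,0} = w^n, w^{n,1}, …, w^{n,m} = w^{n+1} satisfies, for every n and every i = 1,…,m, the regularized splitting scheme B (w^{n,i} − w^{n,i−1})/τ + R_i w^{n,i−1} = 0, with w^0 = u⁰. Then the scheme is stable and ‖w^{n+1}‖_B ≤ ‖u⁰‖_B for all n = 0,…,N−1. -/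
open scoped RealInnerProductSpace

set_option maxHeartbeats 2000000 in
/-- Stability in the `B`-norm of the regularized splitting scheme
`B (wⁿ'ⁱ - wⁿ'ⁱ⁻¹)/τ + Rᵢ wⁿ'ⁱ⁻¹ = 0` with
`Rᵢ = aᵢ (bᵢ I + A + στaᵢ A)⁻¹ A`, under the condition `2γσ ≥ 1`. -/
theorem regularized_splitting_scheme_stable
    {H : Type*} [NormedAddCommGroup H] [InnerProductSpace ℝ H] [FiniteDimensional ℝ H]
    (τ σ : ℝ) (hτ : 0 < τ) (hσ : 0 < σ)
    (m : ℕ) (hm : 1 ≤ m)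
    (B : H →ₗ[ℝ] H)
    (hBsym : ∀ x y : H, ⟪B x, y⟫ = ⟪x, B y⟫)
    (γ : ℝ) (hγ : 0 < γ)
    (hBγ : ∀ x : H, γ * ‖x‖ ^ 2 ≤ ⟪B x, x⟫)
    (hγσ : 1 ≤ 2 * γ * σ)
    (A : H →ₗ[ℝ] H)
    (hAsym : ∀ x y : H, ⟪A x, y⟫ = ⟪x, A y⟫)
    (δ : ℝ) (hδ : 0 < δ)
    (hAδ : ∀ x : H, δ * ‖x‖ ^ 2 ≤ ⟪A x, x⟫)
    (a b : Fin m → ℝ) (ha : ∀ i, 0 < a i) (hb : ∀ i, 0 < b i)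
    (R : Fin m → (H →ₗ[ℝ] H))
    (hR : ∀ i, R i = a i •
      (Ring.inverse (b i • (1 : H →ₗ[ℝ] H) + A + (σ * τ * a i) • A) * A))
    (N : ℕ) (u0 : H) (w : ℕ → H) (ws : ℕ → ℕ → H)
    (hw0 : w 0 = u0)
    (hws0 : ∀ n, n < N → ws n 0 = w n)
    (hwsm : ∀ n, n < N → ws n m = w (n + 1))
    (hscheme : ∀ n, n < N → ∀ i : Fin m,
      (1 / τ) • B (ws n (i + 1) - ws n i) + R i (ws n i) = 0) :
    ∀ n, n < N →
      Real.sqrt ⟪B (w (n + 1)), w (n + 1)⟫ ≤ Real.sqrt ⟪B u0, u0⟫ := by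
  have hA0 : ∀ y : H, 0 ≤ ⟪A y, y⟫ := fun y => le_trans (by positivity) (hAδ y)
  -- key regularization property: στ‖R i x‖² ≤ ⟪R i x, x⟫
  have keyR : ∀ (i : Fin m) (x : H), σ * τ * ‖R i x‖ ^ 2 ≤ ⟪R i x, x⟫ := by
    intro i x
    set c : ℝ := 1 + σ * τ * a i with hc
    set G : H →ₗ[ℝ] H := b i • (1 : H →ₗ[ℝ] H) + A + (σ * τ * a i) • A with hG
    have hGapp : ∀ y : H, G y = b i • y + A y + (σ * τ * a i) • A y := by
      intro y; simp [hG, LinearMap.add_apply, LinearMap.smul_apply]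
    have hGpos : ∀ y : H, b i * ‖y‖ ^ 2 ≤ ⟪G y, y⟫ := by
      intro y
      have h1 : ⟪G y, y⟫ = b i * ‖y‖ ^ 2 + (1 + σ * τ * a i) * ⟪A y, y⟫ := by
        rw [hGapp]
        simp [inner_add_left, real_inner_smul_left, real_inner_self_eq_norm_sq]
        ring
      nlinarith [hA0 y, mul_pos (mul_pos hσ hτ) (ha i)]
    have hGunit : IsUnit G := by
      rw [LinearMap.isUnit_iff_ker_eq_bot, LinearMap.ker_eq_bot']
      intro y hy
      have h1 := hGpos y
      rw [hy] at h1
      simp only [inner_zero_left] at h1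
      have : ‖y‖ ^ 2 ≤ 0 := by nlinarith [hb i]
      have : ‖y‖ = 0 := by nlinarith [norm_nonneg y]
      exact norm_eq_zero.mp this
    set z : H := Ring.inverse G (A x) with hz
    have hGz : G z = A x := by
      have h1 : G * Ring.inverse G = 1 := Ring.mul_inverse_cancel G hGunit
      calc G z = (G * Ring.inverse G) (A x) := rfl
        _ = A x := by rw [h1]; rfl
    set u : H := x - c • z with hu
    have hAx : A x = b i • z + c • A z := by
      rw [← hGz, hGapp, hc]; rw [add_smul, one_smul]; abel
    have hAu : A u = b i • z := by
      rw [hu, map_sub, map_smul, hAx]; abel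
    have hz' : z = (b i)⁻¹ • A u := by
      rw [hAu, smul_smul, inv_mul_cancel₀ (hb i).ne', one_smul]
    have hRx : R i x = a i • z := by
      rw [hR i]; rfl
    have hx : x = u + c • z := by rw [hu]; abel
    rw [hRx, hx, hz']
    have hnorm : ‖a i • ((b i)⁻¹ • A u)‖ ^ 2 = (a i * (b i)⁻¹) ^ 2 * ‖A u‖ ^ 2 := by
      rw [smul_smul, norm_smul]
      rw [Real.norm_eq_abs, mul_pow, sq_abs]
    rw [hnorm]
    have hinner : ⟪a i • ((b i)⁻¹ • A u), u + c • ((b i)⁻¹ • A u)⟫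
        = a i * (b i)⁻¹ * ⟪A u, u⟫ + a i * (b i)⁻¹ * (c * (b i)⁻¹) * ‖A u‖ ^ 2 := by
      simp [inner_add_right, real_inner_smul_left, real_inner_smul_right,
        real_inner_self_eq_norm_sq]
      ring
    rw [hinner]
    have hb' : 0 < (b i)⁻¹ := inv_pos.mpr (hb i)
    have h1 : 0 ≤ ⟪A u, u⟫ := hA0 u
    rw [hc]
    have key : a i * (b i)⁻¹ * ((1 + σ * τ * a i) * (b i)⁻¹) * ‖A u‖ ^ 2
        = σ * τ * ((a i * (b i)⁻¹) ^ 2 * ‖A u‖ ^ 2)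
          + a i * (b i)⁻¹ * (b i)⁻¹ * ‖A u‖ ^ 2 := by ring
    linarith [mul_nonneg (mul_nonneg (ha i).le hb'.le) h1,
      mul_nonneg (mul_nonneg (mul_nonneg (ha i).le hb'.le) hb'.le) (sq_nonneg ‖A u‖)]
  have keyR0 : ∀ (i : Fin m) (x : H), 0 ≤ ⟪R i x, x⟫ := by
    intro i x
    exact le_trans (by positivity) (keyR i x)
  -- one substep decreases the B-energy
  have step : ∀ n, n < N → ∀ i : Fin m,
      ⟪B (ws n (i + 1)), ws n (i + 1)⟫ ≤ ⟪B (ws n i), ws n i⟫ := by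
    intro n hn i
    set x : H := ws n i with hxdef
    set x' : H := ws n (i + 1) with hx'def
    set v : H := x' - x with hv
    have hsch := hscheme n hn i
    rw [← hxdef, ← hx'def, ← hv] at hsch
    clear_value x x' v
    have hBv : B v = (-τ) • R i x := by
      have h1 : (1 / τ) • B v = - R i x := eq_neg_of_add_eq_zero_left hsch
      have h2 : τ • ((1 / τ) • B v) = τ • (- R i x) := by rw [h1]
      rw [smul_smul, mul_one_div, div_self hτ.ne', one_smul] at h2
      rw [h2, smul_neg, neg_smul]
    have hBvx : ⟪B v, x⟫ = -(τ * ⟪R i x, x⟫) := by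
      rw [hBv, real_inner_smul_left]; ring
    have hErs0 : ⟪B v, v⟫ ≤ τ * (‖R i x‖ * ‖v‖) := by
      rw [hBv, real_inner_smul_left]
      have h3 : -(‖R i x‖ * ‖v‖) ≤ ⟪R i x, v⟫ :=
        neg_abs_le _ |>.trans' (by
          have := abs_real_inner_le_norm (R i x) v
          linarith [neg_le_neg this])
      nlinarith
    obtain ⟨r, hr⟩ : ∃ r : ℝ, r = ‖R i x‖ := ⟨_, rfl⟩
    obtain ⟨s, hs⟩ : ∃ s : ℝ, s = ‖v‖ := ⟨_, rfl⟩
    obtain ⟨E, hE⟩ : ∃ E : ℝ, E = ⟪B v, v⟫ := ⟨_, rfl⟩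
    obtain ⟨P, hP⟩ : ∃ P : ℝ, P = ⟪R i x, x⟫ := ⟨_, rfl⟩
    have hEs : γ * s ^ 2 ≤ E := by rw [hE, hs]; exact hBγ v
    have hErs : E ≤ τ * (r * s) := by rw [hE, hr, hs]; exact hErs0
    have hsnn : 0 ≤ s := hs ▸ norm_nonneg v
    have hrnn : 0 ≤ r := hr ▸ norm_nonneg _
    have hE2 : γ * E ≤ τ ^ 2 * r ^ 2 := by
      nlinarith [sq_nonneg (γ * s - τ * r), mul_le_mul_of_nonneg_left hEs hγ.le,
        mul_le_mul_of_nonneg_left hErs hγ.le]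
    have hr2 : σ * τ * r ^ 2 ≤ P := by rw [hr, hP]; exact keyR i x
    have hRpos : 0 ≤ P := by rw [hP]; exact keyR0 i x
    have hE3 : E ≤ 2 * τ * P := by
      have hγσ' : τ / σ ≤ 2 * τ * γ := by
        rw [div_le_iff₀ hσ]
        nlinarith
      have h4 : τ ^ 2 * r ^ 2 ≤ (τ / σ) * P := by
        rw [div_mul_eq_mul_div, le_div_iff₀ hσ]
        nlinarith
      nlinarith [mul_le_mul_of_nonneg_right hγσ' hRpos]
    have hx' : x' = x + v := by rw [hv]; abel
    have expand : ⟪B x', x'⟫ = ⟪B x, x⟫ + 2 * ⟪B v, x⟫ + ⟪B v, v⟫ := by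
      rw [hx', map_add, inner_add_left, inner_add_right, inner_add_right]
      have h5 : ⟪B x, v⟫ = ⟪B v, x⟫ := by
        rw [hBsym x v, real_inner_comm]
      rw [h5]; ring
    rw [expand, hBvx, ← hE, ← hP]
    linarith
  -- within a time step, energy decreases along substeps
  have mono : ∀ n, n < N → ∀ k, k ≤ m →
      ⟪B (ws n k), ws n k⟫ ≤ ⟪B (ws n 0), ws n 0⟫ := by
    intro n hn k
    induction k with
    | zero => intro _; exact le_refl _
    | succ k ih =>
      intro hk
      have hk' : k < m := hk
      have h1 := step n hn ⟨k, hk'⟩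
      simp only [Fin.val_mk] at h1
      exact le_trans h1 (ih hk'.le)
  have stepw : ∀ n, n < N → ⟪B (w (n + 1)), w (n + 1)⟫ ≤ ⟪B (w n), w n⟫ := by
    intro n hn
    rw [← hwsm n hn, ← hws0 n hn]
    exact mono n hn m le_rfl
  have all : ∀ n, n ≤ N → ⟪B (w n), w n⟫ ≤ ⟪B u0, u0⟫ := by
    intro n
    induction n with
    | zero => intro _; rw [hw0]
    | succ n ih =>
      intro hn
      exact le_trans (stepw n hn) (ih (Nat.le_of_succ_le hn))
  intro n hn
  exact Real.sqrt_le_sqrt (all (n + 1) hn)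
end

section
/- Let H be a finite-dimensional real inner product space, let D be a positive semidefinite operator on H, let τ > 0 and σ ≥ 1/2. If y, y' ∈ H satisfy the weighted two-level relation (y' − y)/τ + D(σ y' + (1−σ) y) = 0, then ‖y'‖ ≤ ‖y‖. -/
open scoped RealInnerProductSpace

/-- One step of the weighted two-level scheme with a positive semidefinite operator
`D` and weight `σ ≥ 1/2` does not increase the norm. -/
theorem weighted_two_level_step_nonexpansive
    {H : Type*} [NormedAddCommGroup H] [InnerProductSpace ℝ H] [FiniteDimensional ℝ H]
    (D : H →ₗ[ℝ] H)
    (hDsym : ∀ x y : H, ⟪D x, y⟫ = ⟪x, D y⟫)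
    (hDpos : ∀ x : H, 0 ≤ ⟪D x, x⟫)
    (τ σ : ℝ) (hτ : 0 < τ) (hσ : 1 / 2 ≤ σ)
    (y y' : H)
    (hscheme : (1 / τ) • (y' - y) + D (σ • y' + (1 - σ) • y) = 0) :
    ‖y'‖ ≤ ‖y‖ := by
  set z := σ • y' + (1 - σ) • y with hz
  have hD : D z = -((1 / τ) • (y' - y)) := eq_neg_of_add_eq_zero_right hscheme
  have h1 : (0 : ℝ) ≤ ⟪D z, z⟫ := hDpos z
  rw [hD, hz] at h1
  simp only [inner_neg_left, inner_add_right, inner_smul_left, inner_smul_right,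
    inner_sub_left, RCLike.conj_to_real, real_inner_comm y y'] at h1
  have h2 : (0 : ℝ) ≤ ⟪y' - y, y' - y⟫ := real_inner_self_nonneg
  simp only [inner_sub_left, inner_sub_right, real_inner_comm y y'] at h2
  have hp : ⟪y', y'⟫ = ‖y'‖ ^ 2 := real_inner_self_eq_norm_sq y'
  have hr : ⟪y, y⟫ = ‖y‖ ^ 2 := real_inner_self_eq_norm_sq y
  rw [hp, hr] at h1 h2
  have hτ' : 0 < 1 / τ := by positivity
  have h1' : σ * (‖y'‖ ^ 2 - ⟪y, y'⟫) + (1 - σ) * (⟪y, y'⟫ - ‖y‖ ^ 2) ≤ 0 := by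
    nlinarith [h1]
  have hsq : ‖y'‖ ^ 2 ≤ ‖y‖ ^ 2 := by
    nlinarith [mul_nonneg (by linarith : (0:ℝ) ≤ σ - 1/2) h2]
  nlinarith [norm_nonneg y, norm_nonneg y']
end

section
/- Let H be a finite-dimensional real inner product space, let A be a self-adjoint operator on H with A ≥ δI for some δ > 0, let α ∈ (0,1), and let A^α be the fractional power of A defined by the spectral theorem. Let τ > 0 and σ ≥ 1/2. If a sequence (y^n)_{n=0,…,N} in H satisfies the weighted two-level scheme (y^{n+1} − y^n)/τ + A^α(σ y^{n+1} + (1−σ) y^n) = 0 for n = 0,…,N−1 with y^0 = u⁰, then the scheme is unconditionally stable and ‖y^{n+1}‖ ≤ ‖u⁰‖ for all n = 0,…,N−1. -/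
open scoped RealInnerProductSpace

/-- Unconditional stability of the weighted two-level scheme
`(yⁿ⁺¹ − yⁿ)/τ + A^α(σ yⁿ⁺¹ + (1−σ) yⁿ) = 0` for `σ ≥ 1/2`. -/
theorem weighted_scheme_fractional_power_stable
    {H : Type*} [NormedAddCommGroup H] [InnerProductSpace ℝ H] [FiniteDimensional ℝ H]
    (A : H →ₗ[ℝ] H)
    (hAsym : ∀ x y : H, ⟪A x, y⟫ = ⟪x, A y⟫)
    (δ : ℝ) (hδ : 0 < δ)
    (hAδ : ∀ x : H, δ * ‖x‖ ^ 2 ≤ ⟪A x, x⟫)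
    (α : ℝ) (hα : α ∈ Set.Ioo (0 : ℝ) 1)
    -- spectral decomposition of `A` and the spectral definition of `A^α`
    (n : ℕ) (e : OrthonormalBasis (Fin n) ℝ H) (μ : Fin n → ℝ)
    (hAe : ∀ k, A (e k) = μ k • e k)
    (Aα : H →ₗ[ℝ] H)
    (hAα : ∀ k, Aα (e k) = (μ k ^ α) • e k)
    (τ σ : ℝ) (hτ : 0 < τ) (hσ : 1 / 2 ≤ σ)
    (N : ℕ) (u0 : H) (y : ℕ → H)
    (hy0 : y 0 = u0)
    (hscheme : ∀ n, n < N →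
      (1 / τ) • (y (n + 1) - y n) + Aα (σ • y (n + 1) + (1 - σ) • y n) = 0) :
    ∀ n, n < N → ‖y (n + 1)‖ ≤ ‖u0‖ := by
  have hμ : ∀ k, 0 < μ k := by
    intro k
    have h1 : ‖e k‖ = 1 := e.orthonormal.1 k
    have h2 := hAδ (e k)
    rw [hAe k, real_inner_smul_left, real_inner_self_eq_norm_sq, h1] at h2
    nlinarith
  have hpos : ∀ x : H, 0 ≤ ⟪Aα x, x⟫ := by
    intro x
    have hx : Aα x = ∑ k, (e.repr x k * μ k ^ α) • e k := by
      conv_lhs => rw [← e.sum_repr x]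
      rw [map_sum]
      refine Finset.sum_congr rfl fun k _ => ?_
      rw [LinearMap.map_smul, hAα, smul_smul]
    rw [hx, sum_inner]
    refine Finset.sum_nonneg fun k _ => ?_
    rw [real_inner_smul_left, ← e.repr_apply_apply]
    have h3 : (0:ℝ) ≤ μ k ^ α := (Real.rpow_pos_of_pos (hμ k) α).le
    nlinarith [sq_nonneg (e.repr x k)]
  have hstep : ∀ m, m < N → ‖y (m + 1)‖ ≤ ‖y m‖ := by
    intro m hm
    set a := y (m + 1) with ha
    set b := y m with hb
    set w := σ • a + (1 - σ) • b with hw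
    have h := hscheme m hm
    have heq : a - b = (-τ) • Aα w := by
      have h1 : (1 / τ) • (a - b) = -(Aα w) := by
        rw [eq_neg_iff_add_eq_zero]; exact h
      have h2 : τ • ((1 / τ) • (a - b)) = τ • (-(Aα w)) := by rw [h1]
      rw [smul_smul, mul_one_div, div_self hτ.ne', one_smul, smul_neg] at h2
      rw [h2, neg_smul]
    have hip : ⟪a - b, w⟫ = -τ * ⟪Aα w, w⟫ := by
      rw [heq, real_inner_smul_left]
    have hle : ⟪a - b, w⟫ ≤ 0 := by
      rw [hip]
      have := hpos w
      nlinarith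
    have hexp : ⟪a - b, w⟫ = σ * ⟪a, a⟫ + (1 - 2 * σ) * ⟪a, b⟫ - (1 - σ) * ⟪b, b⟫ := by
      rw [hw, inner_add_right, real_inner_smul_right, real_inner_smul_right,
        inner_sub_left, inner_sub_left]
      rw [real_inner_comm b a]
      ring
    have hd : (0:ℝ) ≤ ⟪a - b, a - b⟫ := real_inner_self_nonneg
    have hd2 : ⟪a - b, a - b⟫ = ⟪a, a⟫ - 2 * ⟪a, b⟫ + ⟪b, b⟫ := by
      rw [inner_sub_left, inner_sub_right, inner_sub_right, real_inner_comm b a]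
      ring
    have hna : ⟪a, a⟫ = ‖a‖ ^ 2 := real_inner_self_eq_norm_sq a
    have hnb : ⟪b, b⟫ = ‖b‖ ^ 2 := real_inner_self_eq_norm_sq b
    have hsq : ‖a‖ ^ 2 ≤ ‖b‖ ^ 2 := by nlinarith [hle, hexp, hd, hd2]
    nlinarith [norm_nonneg a, norm_nonneg b]
  intro m hm
  rw [← hy0]
  induction m with
  | zero => exact hstep 0 hm
  | succ k ih => exact (hstep (k + 1) hm).trans (ih (Nat.lt_of_succ_lt hm))
end

section
/- Let H be a finite-dimensional real inner product space, let A be a self-adjoint operator on H with A ≥ δI for some δ > 0, let m ≥ 1, and let a_i > 0, b_i > 0 for i = 1,…,m. Define R = Σ_{i=1}^m a_i (b_i I + A)⁻¹. If v : [0,T] → H is differentiable and satisfies dv/dt + R A v = 0 on (0,T] with v(0) = u⁰, then ‖v(t)‖ ≤ ‖u⁰‖ for all t ∈ [0,T]. -/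
open scoped RealInnerProductSpace

/-- A priori estimate `‖v(t)‖ ≤ ‖u⁰‖` for the Cauchy problem
`dv/dt + R A v = 0`, `v(0) = u⁰`, with `R = Σᵢ aᵢ (bᵢ I + A)⁻¹`. -/
theorem cauchy_rational_approximation_a_priori_estimate
    {H : Type*} [NormedAddCommGroup H] [InnerProductSpace ℝ H] [FiniteDimensional ℝ H]
    (A : H →ₗ[ℝ] H)
    (hAsym : ∀ x y : H, ⟪A x, y⟫ = ⟪x, A y⟫)
    (δ : ℝ) (hδ : 0 < δ)
    (hAδ : ∀ x : H, δ * ‖x‖ ^ 2 ≤ ⟪A x, x⟫)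
    (m : ℕ) (hm : 1 ≤ m)
    (a b : Fin m → ℝ) (ha : ∀ i, 0 < a i) (hb : ∀ i, 0 < b i)
    (R : H →ₗ[ℝ] H)
    (hR : R = ∑ i, a i • Ring.inverse (b i • (1 : H →ₗ[ℝ] H) + A))
    (T : ℝ) (hT : 0 < T) (v : ℝ → H) (u0 : H)
    (hv_cont : ContinuousOn v (Set.Icc 0 T))
    (hv : ∀ t ∈ Set.Ioc 0 T, HasDerivAt v (-(R (A (v t)))) t)
    (hv0 : v 0 = u0) :
    ∀ t ∈ Set.Icc 0 T, ‖v t‖ ≤ ‖u0‖ := by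
  -- Step 1: R A is positive semidefinite.
  have hRA : ∀ x : H, 0 ≤ ⟪R (A x), x⟫ := by
    intro x
    rw [hR]
    rw [LinearMap.sum_apply, sum_inner]
    apply Finset.sum_nonneg
    intro i _
    set B : H →ₗ[ℝ] H := b i • (1 : H →ₗ[ℝ] H) + A with hBdef
    -- B is bijective
    have hBpos : ∀ z : H, (b i + δ) * ‖z‖ ^ 2 ≤ ⟪B z, z⟫ := by
      intro z
      have : ⟪B z, z⟫ = b i * ⟪z, z⟫ + ⟪A z, z⟫ := by
        simp [hBdef, inner_add_left, real_inner_smul_left]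
      rw [this, real_inner_self_eq_norm_sq]
      have := hAδ z
      nlinarith
    have hBinj : Function.Injective B := by
      rw [← LinearMap.ker_eq_bot, LinearMap.ker_eq_bot']
      intro z hz
      have h1 := hBpos z
      rw [hz, inner_zero_left] at h1
      have hbd : 0 < b i + δ := by linarith [(hb i)]
      have : ‖z‖ ^ 2 ≤ 0 := by
        by_contra h
        push_neg at h
        nlinarith
      have : ‖z‖ = 0 := by nlinarith [sq_nonneg ‖z‖, norm_nonneg z]
      simpa using this
    have hBunit : IsUnit B :=
      (Module.End.isUnit_iff B).mpr ⟨hBinj, LinearMap.injective_iff_surjective.mp hBinj⟩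
    have h1 : Ring.inverse B * B = 1 := Ring.inverse_mul_cancel B hBunit
    have h2 : B * Ring.inverse B = 1 := Ring.mul_inverse_cancel B hBunit
    have hABcomm : A * B = B * A := by
      simp only [hBdef, mul_add, add_mul, mul_smul_comm, smul_mul_assoc, mul_one, one_mul]
    have hcomm : Ring.inverse B * A = A * Ring.inverse B := by
      calc Ring.inverse B * A = Ring.inverse B * A * (B * Ring.inverse B) := by
            rw [h2, mul_one]
        _ = Ring.inverse B * (A * B) * Ring.inverse B := by
            rw [mul_assoc, mul_assoc, mul_assoc]
        _ = Ring.inverse B * (B * A) * Ring.inverse B := by rw [hABcomm]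
        _ = (Ring.inverse B * B) * (A * Ring.inverse B) := by
            rw [mul_assoc, mul_assoc, mul_assoc]
        _ = A * Ring.inverse B := by rw [h1, one_mul]
    set y : H := Ring.inverse B x with hy
    have hBy : B y = x := by
      have := congrArg (fun f : H →ₗ[ℝ] H => f x) h2
      simpa [Module.End.mul_apply] using this
    have hinvAx : Ring.inverse B (A x) = A y := by
      have := congrArg (fun f : H →ₗ[ℝ] H => f x) hcomm
      simpa [Module.End.mul_apply] using this
    rw [LinearMap.smul_apply, real_inner_smul_left, hinvAx, ← hBy]
    have hinner : ⟪A y, B y⟫ = b i * ⟪A y, y⟫ + ⟪A y, A y⟫ := by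
      simp [hBdef, inner_add_right, real_inner_smul_right]
    have h3 : 0 ≤ ⟪A y, y⟫ := le_trans (by positivity) (hAδ y)
    have h4 : (0:ℝ) ≤ ⟪A y, A y⟫ := real_inner_self_nonneg
    have h5 : 0 ≤ ⟪A y, B y⟫ := by
      rw [hinner]; have := (hb i).le; positivity
    exact mul_nonneg (ha i).le h5
  -- Step 2: t ↦ ⟪v t, v t⟫ is antitone on [0, T].
  set g : ℝ → ℝ := fun t => ⟪v t, v t⟫ with hg
  have hg_cont : ContinuousOn g (Set.Icc 0 T) := hv_cont.inner hv_cont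
  have hg_deriv : ∀ t ∈ Set.Ioc 0 T,
      HasDerivAt g (-(2 * ⟪R (A (v t)), v t⟫)) t := by
    intro t ht
    have hd := hv t ht
    have := hd.inner ℝ hd
    have heq : ⟪v t, -(R (A (v t)))⟫ + ⟪-(R (A (v t))), v t⟫
        = -(2 * ⟪R (A (v t)), v t⟫) := by
      rw [inner_neg_right, inner_neg_left, real_inner_comm (v t)]
      ring
    rwa [heq] at this
  have hanti : AntitoneOn g (Set.Icc 0 T) := by
    apply antitoneOn_of_deriv_nonpos (convex_Icc 0 T) hg_cont
    · intro t ht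
      rw [interior_Icc] at ht
      exact (hg_deriv t ⟨ht.1, ht.2.le⟩).differentiableAt.differentiableWithinAt
    · intro t ht
      rw [interior_Icc] at ht
      rw [(hg_deriv t ⟨ht.1, ht.2.le⟩).deriv]
      have := hRA (v t)
      linarith
  -- Step 3: conclude.
  intro t ht
  have h0T : (0:ℝ) ∈ Set.Icc 0 T := ⟨le_refl 0, hT.le⟩
  have := hanti h0T ht ht.1
  rw [hg] at this
  simp only [hv0] at this
  rw [real_inner_self_eq_norm_sq, real_inner_self_eq_norm_sq] at this
  nlinarith [norm_nonneg (v t), norm_nonneg u0]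
end

section
/- Let H be a finite-dimensional real inner product space, let A be a self-adjoint operator on H with A ≥ δI for some δ > 0, and let α ∈ (0,1). Then the Balakrishnan integral representation holds: A^{−α} = (sin(απ)/π) ∫₀^∞ θ^{−α} (A + θI)⁻¹ dθ, where A^{−α} is the fractional power of the invertible operator A defined by the spectral theorem and the integral is a convergent improper operator-valued (Bochner) integral. -/
/-!
Diagonalize `A` in the orthonormal eigenbasis `e`: for `θ > 0` the resolvent `(A + θ)⁻¹` acts on
`e k` as `(μ k + θ)⁻¹`, so the operator integral reduces to the scalar integrals
`∫₀^∞ θ^{-α} (μ + θ)⁻¹ dθ = μ^{-α} π / sin(πα)`. Scaling `θ ↦ μθ` reduces these to `μ = 1`,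
and the substitution `x = θ / (1 + θ)` turns that into the Beta integral `B(1 - α, α)`,
which equals `Γ(1 - α) Γ(α) = π / sin(πα)` by the reflection formula.
-/

open scoped RealInnerProductSpace
open MeasureTheory Set Real InnerProductSpace

namespace OrthonormalBasis

section Diagonal

variable {ι 𝕜 E : Type*} [Fintype ι] [RCLike 𝕜] [NormedAddCommGroup E] [InnerProductSpace 𝕜 E]
  (b : OrthonormalBasis ι 𝕜 E)

noncomputable def diagonal (c : ι → 𝕜) : E →L[𝕜] E :=
  ∑ k, c k • rankOne 𝕜 (b k) (b k)

lemma diagonal_apply_self (c : ι → 𝕜) (j : ι) : b.diagonal c (b j) = c j • b j := by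
  classical
  simp [diagonal, orthonormal_iff_ite.mp b.orthonormal]

lemma eq_diagonal_of_apply_eq_smul {T : E →L[𝕜] E} {c : ι → 𝕜}
    (hT : ∀ k, T (b k) = c k • b k) : T = b.diagonal c :=
  ContinuousLinearMap.coe_injective <| b.toBasis.ext fun j => by
    simp [hT, diagonal_apply_self]

lemma smul_diagonal (r : 𝕜) (c : ι → 𝕜) : r • b.diagonal c = b.diagonal (r • c) := by
  simp [diagonal, Finset.smul_sum, smul_smul]

lemma ring_inverse_eq_diagonal_inv {T : E →L[𝕜] E} {c : ι → 𝕜}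
    (hT : ∀ k, T (b k) = c k • b k) (hc : ∀ k, c k ≠ 0) :
    Ring.inverse T = b.diagonal c⁻¹ := by
  have hone : (1 : E →L[𝕜] E) = b.diagonal 1 := b.eq_diagonal_of_apply_eq_smul fun k => by simp
  have hmul_left : T * b.diagonal c⁻¹ = 1 := by
    rw [hone]
    exact b.eq_diagonal_of_apply_eq_smul fun k => by
      simp [diagonal_apply_self, hT, smul_smul, hc k]
  have hmul_right : b.diagonal c⁻¹ * T = 1 := by
    rw [hone]
    exact b.eq_diagonal_of_apply_eq_smul fun k => by
      simp [diagonal_apply_self, hT, smul_smul, hc k]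
  exact Ring.inverse_unit ⟨T, _, hmul_left, hmul_right⟩

end Diagonal

section Integral

variable {ι E X : Type*} [Fintype ι] [NormedAddCommGroup E] [InnerProductSpace ℝ E]
  (b : OrthonormalBasis ι ℝ E) [MeasurableSpace X] {ν : Measure X} {f : ι → X → ℝ}

lemma integrable_diagonal (hf : ∀ k, Integrable (f k) ν) :
    Integrable (fun x => b.diagonal (fun k => f k x)) ν := by
  simp only [diagonal]
  exact integrable_finsetSum (f := fun k x => f k x • rankOne ℝ (b k) (b k)) _
    fun k _ => (hf k).smul_const _

lemma integral_diagonal [CompleteSpace E] (hf : ∀ k, Integrable (f k) ν) :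
    ∫ x, b.diagonal (fun k => f k x) ∂ν = b.diagonal (fun k => ∫ x, f k x ∂ν) := by
  simp only [diagonal]
  rw [integral_finsetSum (f := fun k x => f k x • rankOne ℝ (b k) (b k)) _
    fun k _ => (hf k).smul_const _]
  simp only [integral_smul_const]

end Integral

end OrthonormalBasis

namespace Real

variable {α : ℝ}

lemma betaIntegral_one_sub_self (hα : α ∈ Ioo 0 1) :
    ∫ x in (0 : ℝ)..1, x ^ (-α) * (1 - x) ^ (α - 1) = π / sin (π * α) := by
  obtain ⟨hα0, hα1⟩ := hα
  have hbeta := Complex.Gamma_mul_Gamma_eq_betaIntegral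
    (s := ((1 - α : ℝ) : ℂ)) (t := (α : ℂ)) (by simpa using hα1) (by simpa using hα0)
  have hsum : ((1 - α : ℝ) : ℂ) + α = 1 := by push_cast; ring
  have hreal : Complex.betaIntegral ((1 - α : ℝ) : ℂ) α
      = ((∫ x in (0 : ℝ)..1, x ^ (-α) * (1 - x) ^ (α - 1) : ℝ) : ℂ) := by
    rw [Complex.betaIntegral, ← intervalIntegral.integral_ofReal]
    refine intervalIntegral.integral_congr fun x hx => ?_
    rw [uIcc_of_le zero_le_one] at hx
    push_cast
    rw [Complex.ofReal_cpow hx.1, Complex.ofReal_cpow (sub_nonneg.2 hx.2)]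
    push_cast
    ring_nf
  rw [hsum, Complex.Gamma_one, one_mul, hreal, Complex.Gamma_ofReal, Complex.Gamma_ofReal,
    ← Complex.ofReal_mul, Complex.ofReal_inj, mul_comm] at hbeta
  rw [← hbeta, Gamma_mul_Gamma_one_sub]

lemma image_div_one_add_Ioi : (fun θ : ℝ => θ / (1 + θ)) '' Ioi 0 = Ioo 0 1 := by
  ext x
  constructor
  · rintro ⟨θ, hθ : 0 < θ, rfl⟩
    exact ⟨by positivity, (div_lt_one (by positivity)).2 (by linarith)⟩
  · rintro ⟨hx0, hx1⟩
    refine ⟨x / (1 - x), div_pos hx0 (sub_pos.2 hx1), ?_⟩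
    have : 1 - x ≠ 0 := (sub_pos.2 hx1).ne'
    field_simp
    ring

lemma integral_rpow_neg_mul_inv_one_add (hα : α ∈ Ioo 0 1) :
    ∫ θ in Ioi (0 : ℝ), θ ^ (-α) * (1 + θ)⁻¹ = π / sin (π * α) := by
  have hderiv : ∀ θ ∈ Ioi (0 : ℝ),
      HasDerivWithinAt (fun θ => θ / (1 + θ)) ((1 + θ) ^ 2)⁻¹ (Ioi 0) θ := by
    intro θ (hθ : 0 < θ)
    have : HasDerivAt (fun θ : ℝ => θ / (1 + θ)) ((1 * (1 + θ) - θ * 1) / (1 + θ) ^ 2) θ :=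
      (hasDerivAt_id' θ).div ((hasDerivAt_id' θ).const_add 1) (by positivity)
    exact (this.congr_deriv (by ring)).hasDerivWithinAt
  have hmono : MonotoneOn (fun θ : ℝ => θ / (1 + θ)) (Ioi 0) := by
    intro a (ha : 0 < a) b (hb : 0 < b) hab
    rw [div_le_div_iff₀ (by positivity) (by positivity)]
    nlinarith
  have hsubst := integral_image_eq_integral_deriv_smul_of_monotoneOn measurableSet_Ioi hderiv
    hmono (fun x => x ^ (-α) * (1 - x) ^ (α - 1))
  rw [image_div_one_add_Ioi, ← integral_Ioc_eq_integral_Ioo,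
    ← intervalIntegral.integral_of_le zero_le_one, betaIntegral_one_sub_self hα] at hsubst
  rw [hsubst]
  refine setIntegral_congr_fun measurableSet_Ioi fun θ (hθ : 0 < θ) => ?_
  have hθ1 : 0 < 1 + θ := by positivity
  have h1 : 1 - θ / (1 + θ) = (1 + θ)⁻¹ := by field_simp; ring
  simp only [smul_eq_mul]
  rw [h1, div_rpow hθ.le hθ1.le, inv_rpow hθ1.le, rpow_sub hθ1, rpow_one, rpow_neg hθ1.le]
  field_simp

lemma integrableOn_rpow_neg_mul_inv_add (hα : α ∈ Ioo 0 1) {μ : ℝ} (hμ : 0 < μ) :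
    IntegrableOn (fun θ : ℝ => θ ^ (-α) * (μ + θ)⁻¹) (Ioi 0) := by
  have hmeas : AEStronglyMeasurable (fun θ : ℝ => θ ^ (-α) * (μ + θ)⁻¹) :=
    (by fun_prop : Measurable fun θ : ℝ => θ ^ (-α) * (μ + θ)⁻¹).aestronglyMeasurable
  rw [← Ioc_union_Ioi_eq_Ioi zero_le_one, integrableOn_union,
    integrableOn_Ioc_iff_integrableOn_Ioo]
  constructor
  · refine ((intervalIntegral.integrableOn_Ioo_rpow_iff (s := -α) zero_lt_one).2
      (by linarith [hα.2]) |>.const_mul μ⁻¹).mono' hmeas.restrict ?_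
    filter_upwards [ae_restrict_mem measurableSet_Ioo] with θ ⟨hθ, _⟩
    rw [norm_of_nonneg (by positivity), mul_comm]
    exact mul_le_mul_of_nonneg_right (inv_anti₀ hμ (by linarith)) (by positivity)
  · refine (integrableOn_Ioi_rpow_of_lt (a := -α - 1) (by linarith [hα.1]) zero_lt_one).mono'
      hmeas.restrict ?_
    filter_upwards [ae_restrict_mem measurableSet_Ioi] with θ (hθ : 1 < θ)
    rw [norm_of_nonneg (by positivity), rpow_sub_one (by positivity), div_eq_mul_inv]
    gcongr
    linarith

lemma integral_rpow_neg_mul_inv_add (hα : α ∈ Ioo 0 1) {μ : ℝ} (hμ : 0 < μ) :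
    ∫ θ in Ioi (0 : ℝ), θ ^ (-α) * (μ + θ)⁻¹ = μ ^ (-α) * (π / sin (π * α)) := by
  have hscale : ∀ θ ∈ Ioi (0 : ℝ),
      (μ * θ) ^ (-α) * (μ + μ * θ)⁻¹ = μ ^ (-α) * μ⁻¹ * (θ ^ (-α) * (1 + θ)⁻¹) := by
    intro θ (hθ : 0 < θ)
    rw [mul_rpow hμ.le hθ.le, ← mul_one_add, mul_inv]
    ring
  rw [← mul_zero μ, ← integral_comp_mul_left_Ioi' _ _ hμ,
    setIntegral_congr_fun measurableSet_Ioi hscale, integral_const_mul,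
    integral_rpow_neg_mul_inv_one_add hα, smul_eq_mul]
  field_simp

end Real

theorem balakrishnan_formula_general
    {H : Type*} [NormedAddCommGroup H] [InnerProductSpace ℝ H] [FiniteDimensional ℝ H]
    (A : H →L[ℝ] H)
    (δ : ℝ) (hδ : 0 < δ)
    (hAδ : ∀ x : H, δ * ‖x‖ ^ 2 ≤ ⟪A x, x⟫)
    (α : ℝ) (hα : α ∈ Set.Ioo (0 : ℝ) 1)
    -- spectral decomposition of `A` and the spectral definition of `A^{−α}`
    (n : ℕ) (e : OrthonormalBasis (Fin n) ℝ H) (μ : Fin n → ℝ)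
    (hAe : ∀ k, A (e k) = μ k • e k)
    (Aneg : H →L[ℝ] H)
    (hAneg : ∀ k, Aneg (e k) = (μ k ^ (-α)) • e k) :
    IntegrableOn (fun θ : ℝ => θ ^ (-α) • Ring.inverse (A + θ • (1 : H →L[ℝ] H)))
        (Set.Ioi 0) volume ∧
      Aneg = (Real.sin (α * Real.pi) / Real.pi) •
        ∫ θ in Set.Ioi (0 : ℝ),
          θ ^ (-α) • Ring.inverse (A + θ • (1 : H →L[ℝ] H)) := by
  have hμ : ∀ k, 0 < μ k := fun k => by
    have h := hAδ (e k)
    rw [hAe k, real_inner_smul_left, real_inner_self_eq_norm_sq, e.orthonormal.1 k, one_pow,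
      mul_one, mul_one] at h
    linarith
  have hintegrand : ∀ θ ∈ Ioi (0 : ℝ), θ ^ (-α) • Ring.inverse (A + θ • (1 : H →L[ℝ] H))
      = e.diagonal fun k => θ ^ (-α) * (μ k + θ)⁻¹ := by
    intro θ (hθ : 0 < θ)
    rw [e.ring_inverse_eq_diagonal_inv (c := fun k => μ k + θ)
      (fun k => by simp [hAe, add_smul]) (fun k => (add_pos (hμ k) hθ).ne'), e.smul_diagonal]
    rfl
  have hint : ∀ k, IntegrableOn (fun θ => θ ^ (-α) * (μ k + θ)⁻¹) (Ioi 0) :=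
    fun k => integrableOn_rpow_neg_mul_inv_add hα (hμ k)
  refine ⟨IntegrableOn.congr_fun (e.integrable_diagonal hint)
    (fun θ hθ => (hintegrand θ hθ).symm) measurableSet_Ioi, ?_⟩
  have hsin : sin (α * π) ≠ 0 :=
    (sin_pos_of_pos_of_lt_pi (mul_pos hα.1 pi_pos) (mul_lt_of_lt_one_left pi_pos hα.2)).ne'
  rw [setIntegral_congr_fun measurableSet_Ioi hintegrand, e.integral_diagonal hint,
    e.smul_diagonal, e.eq_diagonal_of_apply_eq_smul hAneg]
  congr 1
  ext k
  simp only [Pi.smul_apply, smul_eq_mul, integral_rpow_neg_mul_inv_add hα (hμ k), mul_comm π α]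
  field_simp

/-- Balakrishnan integral representation of the negative fractional power:
`A^{−α} = (sin(απ)/π) ∫₀^∞ θ^{−α} (A + θI)⁻¹ dθ`. -/
theorem balakrishnan_formula
    {H : Type*} [NormedAddCommGroup H] [InnerProductSpace ℝ H] [FiniteDimensional ℝ H]
    (A : H →L[ℝ] H)
    (hAsym : ∀ x y : H, ⟪A x, y⟫ = ⟪x, A y⟫)
    (δ : ℝ) (hδ : 0 < δ)
    (hAδ : ∀ x : H, δ * ‖x‖ ^ 2 ≤ ⟪A x, x⟫)
    (α : ℝ) (hα : α ∈ Set.Ioo (0 : ℝ) 1)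
    -- spectral decomposition of `A` and the spectral definition of `A^{−α}`
    (n : ℕ) (e : OrthonormalBasis (Fin n) ℝ H) (μ : Fin n → ℝ)
    (hAe : ∀ k, A (e k) = μ k • e k)
    (Aneg : H →L[ℝ] H)
    (hAneg : ∀ k, Aneg (e k) = (μ k ^ (-α)) • e k) :
    IntegrableOn (fun θ : ℝ => θ ^ (-α) • Ring.inverse (A + θ • (1 : H →L[ℝ] H)))
        (Set.Ioi 0) volume ∧
      Aneg = (Real.sin (α * Real.pi) / Real.pi) •
        ∫ θ in Set.Ioi (0 : ℝ),
          θ ^ (-α) • Ring.inverse (A + θ • (1 : H →L[ℝ] H)) :=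
  balakrishnan_formula_general A δ hδ hAδ α hα n e μ hAe Aneg hAneg
end

section
/- Let H be a finite-dimensional real inner product space, let A be a self-adjoint operator on H with A ≥ δI for some δ > 0, let β ∈ (0,1), and let κ > 1. Then A^{−β} = (sin(πβ)/((1−β)π)) ∫₀¹ (1−η)^{κ−1} (1 + (κ(1−β)/β − 1) η) (η^{1/(1−β)} I + (1−η)^{κ/β} A)⁻¹ dη, where A^{−β} is defined by the spectral theorem and the integral is a convergent operator-valued (Bochner) integral over (0,1). -/
/-!
On each eigenvector `e k` of `A` the integrand acts as a scalar, so the operator identity reduces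
to its scalar case `l = lam k > 0`. That is the beta integral
`∫₀¹ x^{-β} (1-x)^{β-1} dx = Γ(1-β) Γ(β) = π / sin(πβ)` after the substitution
`x = η^p / (η^p + (1-η)^q l)` with `p = 1/(1-β)`, `q = κ/β`: the substitution is an increasing
bijection of `(0,1)`, and `p(1-β) = 1`, `qβ = κ` turn Jacobian times beta kernel into
`l^β/(1-β)` times the integrand. Integrability is free, since `η^p I + (1-η)^q A` is invertible
on all of `[0,1]`, endpoints included, so the integrand is continuous there.
-/

open scoped RealInnerProductSpace
open MeasureTheory Set Real

theorem integral_rpow_neg_mul_one_sub_rpow {β : ℝ} (hβ0 : 0 < β) (hβ1 : β < 1) :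
    ∫ x in Ioo (0 : ℝ) 1, x ^ (-β) * (1 - x) ^ (β - 1) = π / sin (π * β) := by
  have hΓ := Complex.Gamma_mul_Gamma_eq_betaIntegral (s := ((1 - β : ℝ) : ℂ)) (t := (β : ℂ))
    (by simpa using hβ1) (by simpa using hβ0)
  have hsum : ((1 - β : ℝ) : ℂ) + (β : ℂ) = 1 := by push_cast; ring
  have hbeta : Complex.betaIntegral ((1 - β : ℝ) : ℂ) (β : ℂ)
      = ((∫ x in (0 : ℝ)..1, x ^ (-β) * (1 - x) ^ (β - 1) : ℝ) : ℂ) := by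
    rw [Complex.betaIntegral, ← intervalIntegral.integral_ofReal]
    refine intervalIntegral.integral_congr fun x hx => ?_
    rw [uIcc_of_le zero_le_one] at hx
    have e1 : ((1 - β : ℝ) : ℂ) - 1 = ((-β : ℝ) : ℂ) := by push_cast; ring
    have e2 : (β : ℂ) - 1 = ((β - 1 : ℝ) : ℂ) := by push_cast; ring
    simp only [e1, e2]
    rw [← Complex.ofReal_cpow hx.1, ← Complex.ofReal_one, ← Complex.ofReal_sub,
      ← Complex.ofReal_cpow (sub_nonneg.2 hx.2), Complex.ofReal_mul]
  rw [hsum, Complex.Gamma_one, one_mul, hbeta, Complex.Gamma_ofReal, Complex.Gamma_ofReal,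
    ← Complex.ofReal_mul] at hΓ
  rw [← integral_Ioc_eq_integral_Ioo, ← intervalIntegral.integral_of_le zero_le_one,
    ← Complex.ofReal_injective hΓ, mul_comm, Gamma_mul_Gamma_one_sub]

noncomputable def betaSubst (p q l η : ℝ) : ℝ := η ^ p / (η ^ p + (1 - η) ^ q * l)

noncomputable def betaSubstDeriv (p q l η : ℝ) : ℝ :=
  l * η ^ (p - 1) * (1 - η) ^ (q - 1) * (p * (1 - η) + q * η) / (η ^ p + (1 - η) ^ q * l) ^ 2

section betaSubst

variable {p q l η : ℝ}

theorem rpow_add_one_sub_rpow_mul_pos (hl : 0 < l) (hη : η ∈ Icc (0 : ℝ) 1) :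
    0 < η ^ p + (1 - η) ^ q * l := by
  rcases hη.1.eq_or_lt with rfl | hη0
  · simpa using add_pos_of_nonneg_of_pos (rpow_nonneg le_rfl p) hl
  · exact add_pos_of_pos_of_nonneg (rpow_pos_of_pos hη0 p)
      (mul_nonneg (rpow_nonneg (sub_nonneg.2 hη.2) q) hl.le)

theorem continuousOn_betaSubst (hp : 0 ≤ p) (hq : 0 ≤ q) (hl : 0 < l) :
    ContinuousOn (betaSubst p q l) (Icc 0 1) := by
  have hN := continuous_rpow_const hp
  have hM := (continuous_rpow_const hq).comp (continuous_sub_left (1 : ℝ))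
  exact hN.continuousOn.div (hN.add (hM.mul continuous_const)).continuousOn
    fun η hη => (rpow_add_one_sub_rpow_mul_pos hl hη).ne'

theorem hasDerivAt_betaSubst (hl : 0 < l) (hη : η ∈ Ioo (0 : ℝ) 1) :
    HasDerivAt (betaSubst p q l) (betaSubstDeriv p q l η) η := by
  have hη0 : 0 < η := hη.1
  have hη1 : 0 < 1 - η := sub_pos.2 hη.2
  have hN : HasDerivAt (fun s : ℝ => s ^ p) (p * η ^ (p - 1)) η :=
    hasDerivAt_rpow_const (Or.inl hη0.ne')
  have hM : HasDerivAt (fun s : ℝ => (1 - s) ^ q) (q * (1 - η) ^ (q - 1) * (-1)) η :=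
    (hasDerivAt_rpow_const (Or.inl hη1.ne')).comp η ((hasDerivAt_id η).const_sub 1)
  refine (hN.div (hN.add (hM.mul_const l))
    (rpow_add_one_sub_rpow_mul_pos hl (Ioo_subset_Icc_self hη)).ne').congr_deriv ?_
  have hηp : η ^ p = η ^ (p - 1) * η := by rw [← rpow_add_one hη0.ne', sub_add_cancel]
  have hηq : (1 - η) ^ q = (1 - η) ^ (q - 1) * (1 - η) := by
    rw [← rpow_add_one hη1.ne', sub_add_cancel]
  simp only [Pi.add_apply, betaSubstDeriv]
  rw [hηp, hηq]
  ring

theorem betaSubstDeriv_pos (hp : 0 < p) (hq : 0 < q) (hl : 0 < l) (hη : η ∈ Ioo (0 : ℝ) 1) :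
    0 < betaSubstDeriv p q l η := by
  have hη1 : 0 < 1 - η := sub_pos.2 hη.2
  have hS : 0 < p * (1 - η) + q * η := by nlinarith [hη.1]
  have hD := rpow_add_one_sub_rpow_mul_pos (p := p) (q := q) hl (Ioo_subset_Icc_self hη)
  exact div_pos (mul_pos (mul_pos (mul_pos hl (rpow_pos_of_pos hη.1 _))
    (rpow_pos_of_pos hη1 _)) hS) (pow_pos hD 2)

theorem strictMonoOn_betaSubst (hp : 0 < p) (hq : 0 < q) (hl : 0 < l) :
    StrictMonoOn (betaSubst p q l) (Icc 0 1) := by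
  refine strictMonoOn_of_deriv_pos (convex_Icc 0 1)
    (continuousOn_betaSubst hp.le hq.le hl) fun η hη => ?_
  rw [interior_Icc] at hη
  rw [(hasDerivAt_betaSubst hl hη).deriv]
  exact betaSubstDeriv_pos hp hq hl hη

theorem betaSubst_image_Ioo (hp : 0 < p) (hq : 0 < q) (hl : 0 < l) :
    betaSubst p q l '' Ioo 0 1 = Ioo 0 1 := by
  rw [(continuousOn_betaSubst hp.le hq.le hl).image_Ioo_of_strictMonoOn zero_le_one
    (strictMonoOn_betaSubst hp hq hl)]
  simp [betaSubst, zero_rpow hp.ne', zero_rpow hq.ne']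

theorem betaSubst_rpow_mul_one_sub_rpow (β : ℝ) (hl : 0 < l) (hη : η ∈ Ioo (0 : ℝ) 1) :
    betaSubst p q l η ^ (-β) * (1 - betaSubst p q l η) ^ (β - 1) =
      η ^ (-(p * β)) * (1 - η) ^ (q * (β - 1)) * l ^ (β - 1) * (η ^ p + (1 - η) ^ q * l) := by
  have hη0 : 0 < η := hη.1
  have hη1 : 0 < 1 - η := sub_pos.2 hη.2
  set D := η ^ p + (1 - η) ^ q * l
  have hD : 0 < D := rpow_add_one_sub_rpow_mul_pos hl (Ioo_subset_Icc_self hη)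
  have hM : 0 < (1 - η) ^ q * l := mul_pos (rpow_pos_of_pos hη1 q) hl
  have h1 : 1 - betaSubst p q l η = (1 - η) ^ q * l / D := by
    rw [betaSubst, eq_div_iff hD.ne', sub_mul, div_mul_cancel₀ _ hD.ne']
    ring
  rw [h1, betaSubst, div_rpow (rpow_nonneg hη0.le p) hD.le, div_rpow hM.le hD.le,
    mul_rpow (rpow_nonneg hη1.le q) hl.le, ← rpow_mul hη0.le, ← rpow_mul hη1.le,
    rpow_neg hD.le, show β - 1 = -(1 - β) by ring, rpow_neg hD.le]
  have hDD : D ^ β * D ^ (1 - β) = D := by rw [← rpow_add hD, add_sub_cancel, rpow_one]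
  rw [div_inv_eq_mul, div_inv_eq_mul, mul_neg]
  linear_combination η ^ (-(p * β)) * (1 - η) ^ (q * -(1 - β)) * l ^ (-(1 - β)) * hDD

theorem betaSubstDeriv_mul_rpow_mul_one_sub_rpow {β : ℝ} (hp : p * (1 - β) = 1) (hl : 0 < l)
    (hη : η ∈ Ioo (0 : ℝ) 1) :
    betaSubstDeriv p q l η *
        (betaSubst p q l η ^ (-β) * (1 - betaSubst p q l η) ^ (β - 1)) =
      l ^ β * (1 - η) ^ (q * β - 1) * (p * (1 - η) + q * η) / (η ^ p + (1 - η) ^ q * l) := by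
  have hη0 : 0 < η := hη.1
  have hη1 : 0 < 1 - η := sub_pos.2 hη.2
  have hD := rpow_add_one_sub_rpow_mul_pos (p := p) (q := q) hl (Ioo_subset_Icc_self hη)
  have hη' : η ^ (p - 1) * η ^ (-(p * β)) = 1 := by
    rw [← rpow_add hη0, show p - 1 + -(p * β) = p * (1 - β) - 1 by ring, hp, sub_self, rpow_zero]
  have h1η : (1 - η) ^ (q - 1) * (1 - η) ^ (q * (β - 1)) = (1 - η) ^ (q * β - 1) := by
    rw [← rpow_add hη1]; ring_nf
  have hl' : l * l ^ (β - 1) = l ^ β := by rw [mul_comm, ← rpow_add_one hl.ne', sub_add_cancel]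
  rw [betaSubst_rpow_mul_one_sub_rpow β hl hη, betaSubstDeriv, ← h1η, ← hl']
  field_simp
  linear_combination (p * (1 - η) + η * q) * hη'

end betaSubst

theorem rpow_neg_eq_integral {β κ l : ℝ} (hβ0 : 0 < β) (hβ1 : β < 1) (hκ : 0 < κ) (hl : 0 < l) :
    l ^ (-β) = sin (π * β) / ((1 - β) * π) *
      ∫ η in Ioo (0 : ℝ) 1, (1 - η) ^ (κ - 1) * (1 + (κ * (1 - β) / β - 1) * η) *
        (η ^ (1 / (1 - β)) + (1 - η) ^ (κ / β) * l)⁻¹ := by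
  have h1β : 0 < 1 - β := sub_pos.2 hβ1
  have hp : 0 < 1 / (1 - β) := by positivity
  have hq : 0 < κ / β := by positivity
  have hchange := integral_image_eq_integral_abs_deriv_smul measurableSet_Ioo
    (fun η hη => (hasDerivAt_betaSubst (p := 1 / (1 - β)) (q := κ / β) hl hη).hasDerivWithinAt)
    ((strictMonoOn_betaSubst hp hq hl).injOn.mono Ioo_subset_Icc_self)
    (fun x => x ^ (-β) * (1 - x) ^ (β - 1))
  rw [betaSubst_image_Ioo hp hq hl, integral_rpow_neg_mul_one_sub_rpow hβ0 hβ1] at hchange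
  have hpoint : ∀ η ∈ Ioo (0 : ℝ) 1,
      |betaSubstDeriv (1 / (1 - β)) (κ / β) l η| •
          (betaSubst (1 / (1 - β)) (κ / β) l η ^ (-β) *
            (1 - betaSubst (1 / (1 - β)) (κ / β) l η) ^ (β - 1)) =
        l ^ β / (1 - β) * ((1 - η) ^ (κ - 1) * (1 + (κ * (1 - β) / β - 1) * η) *
          (η ^ (1 / (1 - β)) + (1 - η) ^ (κ / β) * l)⁻¹) := by
    intro η hη
    rw [abs_of_pos (betaSubstDeriv_pos hp hq hl hη), smul_eq_mul,
      betaSubstDeriv_mul_rpow_mul_one_sub_rpow (by field_simp) hl hη,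
      div_mul_cancel₀ κ hβ0.ne']
    field_simp
    ring
  rw [setIntegral_congr_fun measurableSet_Ioo hpoint, integral_const_mul] at hchange
  have hsin : 0 < sin (π * β) := sin_pos_of_pos_of_lt_pi (by positivity) (by nlinarith [pi_pos])
  generalize (∫ η in Ioo (0 : ℝ) 1, (1 - η) ^ (κ - 1) * (1 + (κ * (1 - β) / β - 1) * η) *
    (η ^ (1 / (1 - β)) + (1 - η) ^ (κ / β) * l)⁻¹) = I at hchange ⊢
  rw [rpow_neg hl.le]
  field_simp at hchange ⊢
  linear_combination hchange

theorem ContinuousOn.ringInverse {R X : Type*} [NormedRing R] [HasSummableGeomSeries R]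
    [TopologicalSpace X] {f : X → R} {s : Set X} (hf : ContinuousOn f s)
    (hunit : ∀ x ∈ s, IsUnit (f x)) : ContinuousOn (fun x => Ring.inverse (f x)) s := fun x hx =>
  (hunit x hx).unit_spec ▸ NormedRing.inverse_continuousAt (hunit x hx).unit
    |>.comp_continuousWithinAt (hf x hx)

theorem ContinuousLinearMap.isUnit_of_apply_basis_eq_smul {𝕜 E ι : Type*}
    [NontriviallyNormedField 𝕜] [CompleteSpace 𝕜] [NormedAddCommGroup E] [NormedSpace 𝕜 E]
    [FiniteDimensional 𝕜 E] (b : Module.Basis ι 𝕜 E) {T : E →L[𝕜] E} {c : ι → 𝕜}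
    (hc : ∀ i, c i ≠ 0) (hT : ∀ i, T (b i) = c i • b i) : IsUnit T := by
  have := FiniteDimensional.complete 𝕜 E
  rw [isUnit_iff_isUnit_toLinearMap, LinearMap.isUnit_iff_range_eq_top, eq_top_iff, ← b.span_eq,
    Submodule.span_le]
  rintro _ ⟨i, rfl⟩
  exact ⟨(c i)⁻¹ • b i, by simp [hT, smul_smul, inv_mul_cancel₀ (hc i)]⟩

theorem Ring.inverse_apply_eq_inv_smul {𝕜 E : Type*} [NormedField 𝕜] [NormedAddCommGroup E]
    [NormedSpace 𝕜 E] {T : E →L[𝕜] E} (hT : IsUnit T) {c : 𝕜} (hc : c ≠ 0) {v : E}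
    (hv : T v = c • v) : Ring.inverse T v = c⁻¹ • v := by
  have h := congr($(Ring.inverse_mul_cancel T hT) v)
  rw [mul_apply_eq_comp, hv, map_smul, one_apply_eq_self] at h
  rwa [eq_inv_smul_iff₀ hc]

theorem le_of_coercive_of_apply_eq_smul {E : Type*} [NormedAddCommGroup E] [InnerProductSpace ℝ E]
    {A : E →L[ℝ] E} {δ μ : ℝ} (hA : ∀ x : E, δ * ‖x‖ ^ 2 ≤ ⟪A x, x⟫) {v : E} (hv : ‖v‖ = 1)
    (hAv : A v = μ • v) : δ ≤ μ := by
  simpa [hAv, real_inner_smul_left, real_inner_self_eq_norm_sq, hv] using hA v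

theorem smul_one_add_smul_apply_of_apply_eq_smul {𝕜 E : Type*} [NormedField 𝕜]
    [NormedAddCommGroup E] [NormedSpace 𝕜 E] {A : E →L[𝕜] E} {μ : 𝕜} {v : E}
    (hAv : A v = μ • v) (a b : 𝕜) : (a • (1 : E →L[𝕜] E) + b • A) v = (a + b * μ) • v := by
  simp [hAv, add_smul, smul_smul]

theorem integrableOn_Icc_smul_ringInverse_rpow_smul_one_add {R : Type*} [NormedRing R]
    [NormedAlgebra ℝ R] [HasSummableGeomSeries R] (A : R) {w : ℝ → ℝ} {p q : ℝ}
    (hw : Continuous w) (hp : 0 ≤ p) (hq : 0 ≤ q)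
    (hunit : ∀ η ∈ Icc (0 : ℝ) 1, IsUnit (η ^ p • (1 : R) + (1 - η) ^ q • A)) :
    IntegrableOn (fun η : ℝ => w η • Ring.inverse (η ^ p • (1 : R) + (1 - η) ^ q • A))
      (Icc 0 1) := by
  have hT : Continuous fun η : ℝ => η ^ p • (1 : R) + (1 - η) ^ q • A :=
    ((continuous_rpow_const hp).smul continuous_const).add
      (((continuous_rpow_const hq).comp (continuous_sub_left 1)).smul continuous_const)
  exact (hw.continuousOn.smul (hT.continuousOn.ringInverse hunit)).integrableOn_Icc

theorem fractional_power_integral_representation_kappa_general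
    {H : Type*} [NormedAddCommGroup H] [InnerProductSpace ℝ H] [FiniteDimensional ℝ H]
    (A : H →L[ℝ] H)
    (δ : ℝ) (hδ : 0 < δ)
    (hAδ : ∀ x : H, δ * ‖x‖ ^ 2 ≤ ⟪A x, x⟫)
    (β : ℝ) (hβ : β ∈ Set.Ioo (0 : ℝ) 1)
    (κ : ℝ) (hκ : 1 < κ)
    -- spectral decomposition of `A` and the spectral definition of `A^{−β}`
    (n : ℕ) (e : OrthonormalBasis (Fin n) ℝ H) (lam : Fin n → ℝ)
    (hAe : ∀ k, A (e k) = lam k • e k)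
    (Aneg : H →L[ℝ] H)
    (hAneg : ∀ k, Aneg (e k) = (lam k ^ (-β)) • e k) :
    IntegrableOn
        (fun η : ℝ => ((1 - η) ^ (κ - 1) * (1 + (κ * (1 - β) / β - 1) * η)) •
          Ring.inverse ((η ^ (1 / (1 - β))) • (1 : H →L[ℝ] H) +
            ((1 - η) ^ (κ / β)) • A))
        (Set.Ioo 0 1) volume ∧
      Aneg = (Real.sin (Real.pi * β) / ((1 - β) * Real.pi)) •
        ∫ η in Set.Ioo (0 : ℝ) 1,
          ((1 - η) ^ (κ - 1) * (1 + (κ * (1 - β) / β - 1) * η)) •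
            Ring.inverse ((η ^ (1 / (1 - β))) • (1 : H →L[ℝ] H) +
              ((1 - η) ^ (κ / β)) • A) := by
  obtain ⟨hβ0, hβ1⟩ := hβ
  have hlam : ∀ k, 0 < lam k := fun k =>
    hδ.trans_le (le_of_coercive_of_apply_eq_smul hAδ (e.orthonormal.1 k) (hAe k))
  have hcoef : ∀ η ∈ Icc (0 : ℝ) 1, ∀ k, 0 < η ^ (1 / (1 - β)) + (1 - η) ^ (κ / β) * lam k :=
    fun η hη k => rpow_add_one_sub_rpow_mul_pos (hlam k) hη
  have hunit : ∀ η ∈ Icc (0 : ℝ) 1,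
      IsUnit (η ^ (1 / (1 - β)) • (1 : H →L[ℝ] H) + (1 - η) ^ (κ / β) • A) := fun η hη =>
    ContinuousLinearMap.isUnit_of_apply_basis_eq_smul e.toBasis (fun k => (hcoef η hη k).ne')
      (by simpa using fun k => smul_one_add_smul_apply_of_apply_eq_smul (hAe k) _ _)
  have hw : Continuous fun η : ℝ => (1 - η) ^ (κ - 1) * (1 + (κ * (1 - β) / β - 1) * η) :=
    ((continuous_rpow_const (by linarith)).comp (continuous_sub_left 1)).mul (by fun_prop)
  have hint := (integrableOn_Icc_smul_ringInverse_rpow_smul_one_add A hw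
    (one_div_nonneg.2 (sub_pos.2 hβ1).le) (div_nonneg (by linarith) hβ0.le) hunit).mono_set
    Ioo_subset_Icc_self
  refine ⟨hint, ContinuousLinearMap.coe_injective <|
    e.toBasis.ext fun k => ?_⟩
  simp only [OrthonormalBasis.coe_toBasis, ContinuousLinearMap.coe_coe]
  rw [hAneg, smul_apply, ContinuousLinearMap.integral_apply hint,
    setIntegral_congr_fun measurableSet_Ioo fun η hη => by
      rw [smul_apply, Ring.inverse_apply_eq_inv_smul (hunit η (Ioo_subset_Icc_self hη))
        (hcoef η (Ioo_subset_Icc_self hη) k).ne'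
        (smul_one_add_smul_apply_of_apply_eq_smul (hAe k) _ _), smul_smul],
    integral_smul_const, smul_smul, ← rpow_neg_eq_integral hβ0 hβ1 (by linarith) (hlam k)]

/-- Integral representation of `A^{−β}` with integration over a finite interval and
a smoothness parameter `κ > 1`:
`A^{−β} = (sin(πβ)/((1−β)π)) ∫₀¹ (1−η)^{κ−1} (1 + (κ(1−β)/β − 1)η)
(η^{1/(1−β)} I + (1−η)^{κ/β} A)⁻¹ dη`. -/
theorem fractional_power_integral_representation_kappa
    {H : Type*} [NormedAddCommGroup H] [InnerProductSpace ℝ H] [FiniteDimensional ℝ H]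
    (A : H →L[ℝ] H)
    (hAsym : ∀ x y : H, ⟪A x, y⟫ = ⟪x, A y⟫)
    (δ : ℝ) (hδ : 0 < δ)
    (hAδ : ∀ x : H, δ * ‖x‖ ^ 2 ≤ ⟪A x, x⟫)
    (β : ℝ) (hβ : β ∈ Set.Ioo (0 : ℝ) 1)
    (κ : ℝ) (hκ : 1 < κ)
    -- spectral decomposition of `A` and the spectral definition of `A^{−β}`
    (n : ℕ) (e : OrthonormalBasis (Fin n) ℝ H) (lam : Fin n → ℝ)
    (hAe : ∀ k, A (e k) = lam k • e k)
    (Aneg : H →L[ℝ] H)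
    (hAneg : ∀ k, Aneg (e k) = (lam k ^ (-β)) • e k) :
    IntegrableOn
        (fun η : ℝ => ((1 - η) ^ (κ - 1) * (1 + (κ * (1 - β) / β - 1) * η)) •
          Ring.inverse ((η ^ (1 / (1 - β))) • (1 : H →L[ℝ] H) +
            ((1 - η) ^ (κ / β)) • A))
        (Set.Ioo 0 1) volume ∧
      Aneg = (Real.sin (Real.pi * β) / ((1 - β) * Real.pi)) •
        ∫ η in Set.Ioo (0 : ℝ) 1,
          ((1 - η) ^ (κ - 1) * (1 + (κ * (1 - β) / β - 1) * η)) •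
            Ring.inverse ((η ^ (1 / (1 - β))) • (1 : H →L[ℝ] H) +
              ((1 - η) ^ (κ / β)) • A) :=
  fractional_power_integral_representation_kappa_general A δ hδ hAδ β hβ κ hκ n e lam hAe Aneg hAneg
end

section
/- Let H be a finite-dimensional real inner product space, let B be a positive definite operator on H, let D be a positive semidefinite operator on H, let τ > 0 and σ ≥ 1/2. If y, y' ∈ H satisfy the weighted two-level relation B(y' − y)/τ + D(σ y' + (1−σ) y) = 0, then ‖y'‖_B ≤ ‖y‖_B. -/
open scoped RealInnerProductSpace

/-- One step of the weighted two-level scheme `B(y' − y)/τ + D(σ y' + (1−σ) y) = 0`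
with `B` positive definite, `D` positive semidefinite and weight `σ ≥ 1/2` does not
increase the `B`-norm. -/
theorem weighted_two_level_step_B_norm_nonexpansive
    {H : Type*} [NormedAddCommGroup H] [InnerProductSpace ℝ H] [FiniteDimensional ℝ H]
    (B : H →ₗ[ℝ] H)
    (hBsym : ∀ x y : H, ⟪B x, y⟫ = ⟪x, B y⟫)
    (hBpos : ∀ x : H, x ≠ 0 → 0 < ⟪B x, x⟫)
    (D : H →ₗ[ℝ] H)
    (hDsym : ∀ x y : H, ⟪D x, y⟫ = ⟪x, D y⟫)
    (hDpos : ∀ x : H, 0 ≤ ⟪D x, x⟫)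
    (τ σ : ℝ) (hτ : 0 < τ) (hσ : 1 / 2 ≤ σ)
    (y y' : H)
    (hscheme : (1 / τ) • B (y' - y) + D (σ • y' + (1 - σ) • y) = 0) :
    Real.sqrt ⟪B y', y'⟫ ≤ Real.sqrt ⟪B y, y⟫ := by
  set w := y' - y with hw
  set v := σ • y' + (1 - σ) • y with hv
  have hBnn : ∀ x : H, 0 ≤ ⟪B x, x⟫ := by
    intro x
    rcases eq_or_ne x 0 with rfl | hx
    · simp
    · exact (hBpos x hx).le
  -- from the scheme: B w = (-τ) • D v
  have hBw : B w = (-τ) • D v := by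
    have h : (1 / τ) • B w = - D v := by
      rw [eq_neg_iff_add_eq_zero]; exact hscheme
    have h2 : (τ * (1 / τ)) • B w = τ • (-D v) := by
      rw [mul_smul, h]
    rw [mul_one_div, div_self hτ.ne', one_smul] at h2
    rw [h2, smul_neg, neg_smul]
  have h1 : ⟪B w, v⟫ = -τ * ⟪D v, v⟫ := by
    rw [hBw, real_inner_smul_left]
  -- decomposition y' + y = 2•v - (2σ-1)•w
  have hdecomp : y' + y = (2:ℝ) • v - (2*σ - 1) • w := by
    rw [hv, hw]
    module
  have hkey : ⟪B y', y'⟫ ≤ ⟪B y, y⟫ := by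
    have hdiff : ⟪B y', y'⟫ - ⟪B y, y⟫ = ⟪B (y' + y), w⟫ := by
      have hsym : ⟪B y', y⟫ = ⟪B y, y'⟫ := by rw [hBsym, real_inner_comm]
      rw [hw]
      simp only [map_add, inner_add_left, inner_sub_right]
      linarith [hsym]
    have hexp : ⟪B (y' + y), w⟫ = 2 * ⟪B v, w⟫ - (2*σ - 1) * ⟪B w, w⟫ := by
      rw [hdecomp, map_sub, map_smul, map_smul, inner_sub_left,
        real_inner_smul_left, real_inner_smul_left]
    have hBvw : ⟪B v, w⟫ = -τ * ⟪D v, v⟫ := by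
      rw [← h1, hBsym, real_inner_comm]
    have hDv := hDpos v
    have hBww := hBnn w
    nlinarith [hdiff, hexp, hBvw]
  exact Real.sqrt_le_sqrt hkey
end
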